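/- arXiv:2107.05873 — 2 statements merged into one kernel-verified Lean document; each statement's English description precedes it below -/
import Mathlib

section
/- Let B^k_{lurb} be the tensor obtained from two unitaries as in the SGS construction: B^k_{lurb} = Σ_q V^{(k,r)}_{(l,q)} A^{(u)}_{(q,b)}, where V is a d²×d² unitary matrix (indices grouped as shown) and A satisfies the MPS left-canonical condition Σ_u (A^u)†A^u = I. Then B satisfies the isoTNS isometry condition Σ_{k,u,r} B^k_{lurb} (B^k_{l'urb'})* = δ_{ll'} δ_{bb'}. -/
open Matrix

/-- The SGS tensor `B^k_{lurb} = Σ_q V^{(k,r)}_{(l,q)} (A^u)_{qb}`, built from a unitary `V`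
and a left-canonical MPS tensor `A`, satisfies the isoTNS isometry condition. -/
theorem stmt18 (d : ℕ) (V : Matrix (Fin d × Fin d) (Fin d × Fin d) ℂ) (hV : Vᴴ * V = 1)
    (A : Fin d → Matrix (Fin d) (Fin d) ℂ) (hA : ∑ u : Fin d, (A u)ᴴ * A u = 1)
    (l l' b b' : Fin d) :
    ∑ k : Fin d, ∑ u : Fin d, ∑ r : Fin d,
        (∑ q : Fin d, V (k, r) (l, q) * A u q b) *
          star (∑ q : Fin d, V (k, r) (l', q) * A u q b') =
      if l = l' ∧ b = b' then 1 else 0 := by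
  have hVent : ∀ q q' : Fin d,
      ∑ p : Fin d × Fin d, V p (l, q) * star (V p (l', q')) =
        if l' = l ∧ q' = q then 1 else 0 := by
    intro q q'
    have h := congrArg (fun M => M (l', q') (l, q)) hV
    simp only [Matrix.mul_apply, Matrix.conjTranspose_apply, Matrix.one_apply,
      Prod.mk.injEq, Prod.ext_iff] at h
    rw [← h]
    exact Finset.sum_congr rfl fun p _ => by ring
  have hAent : ∑ u : Fin d, ∑ q : Fin d, A u q b * star (A u q b') =
      if b' = b then 1 else 0 := by
    have h := congrArg (fun M => M b' b) hA
    simp only [Matrix.sum_apply, Matrix.mul_apply, Matrix.conjTranspose_apply,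
      Matrix.one_apply] at h
    rw [← h]
    exact Finset.sum_congr rfl fun u _ => Finset.sum_congr rfl fun q _ => by ring
  calc
    ∑ k : Fin d, ∑ u : Fin d, ∑ r : Fin d,
        (∑ q : Fin d, V (k, r) (l, q) * A u q b) *
          star (∑ q : Fin d, V (k, r) (l', q) * A u q b')
      = ∑ u : Fin d, ∑ k : Fin d, ∑ r : Fin d,
          (∑ q : Fin d, V (k, r) (l, q) * A u q b) *
            star (∑ q : Fin d, V (k, r) (l', q) * A u q b') := Finset.sum_comm
    _ = ∑ u : Fin d, ∑ q : Fin d, ∑ q' : Fin d,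
          (if l' = l ∧ q' = q then (1:ℂ) else 0) * (A u q b * star (A u q' b')) := by
        refine Finset.sum_congr rfl fun u _ => ?_
        calc
          ∑ k : Fin d, ∑ r : Fin d,
              (∑ q : Fin d, V (k, r) (l, q) * A u q b) *
                star (∑ q : Fin d, V (k, r) (l', q) * A u q b')
            = ∑ p : Fin d × Fin d,
                (∑ q : Fin d, V p (l, q) * A u q b) *
                  star (∑ q : Fin d, V p (l', q) * A u q b') := by
              rw [Fintype.sum_prod_type]
          _ = ∑ q : Fin d, ∑ q' : Fin d,
                (if l' = l ∧ q' = q then (1:ℂ) else 0) * (A u q b * star (A u q' b')) := by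
              have expand : ∀ p : Fin d × Fin d,
                  (∑ q : Fin d, V p (l, q) * A u q b) *
                      star (∑ q : Fin d, V p (l', q) * A u q b') =
                    ∑ q : Fin d, ∑ q' : Fin d,
                      (V p (l, q) * star (V p (l', q'))) *
                        (A u q b * star (A u q' b')) := by
                intro p
                rw [star_sum, Finset.sum_mul]
                refine Finset.sum_congr rfl fun q _ => ?_
                rw [Finset.mul_sum]
                refine Finset.sum_congr rfl fun q' _ => ?_
                rw [star_mul']
                ring
              simp only [expand]
              rw [Finset.sum_comm]
              refine Finset.sum_congr rfl fun q _ => ?_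
              rw [Finset.sum_comm]
              refine Finset.sum_congr rfl fun q' _ => ?_
              rw [← hVent q q', Finset.sum_mul]
    _ = if l = l' ∧ b = b' then 1 else 0 := by
        by_cases h : l' = l
        · subst h
          simp only [true_and, ite_mul, one_mul, zero_mul, Finset.sum_ite_eq',
            Finset.mem_univ, if_true]
          rw [hAent]
          by_cases hb : b' = b
          · simp [hb]
          · rw [if_neg hb, if_neg fun hh => hb hh.symm]
        · have h2 : ¬(l = l' ∧ b = b') := fun hc => h hc.1.symm
          simp [h, h2]
end

section
/- There exists a tensor B^k_{lur b} with all indices of dimension d = 2 satisfying the isoTNS isometry condition Σ_{k,u,r} B^k_{lurb}(B^k_{l'urb'})* = δ_{ll'}δ_{bb'} which cannot be written in the factorized SGS form B^k_{lurb} = Σ_q V^{(k,r)}_{(l,q)} A^{(u)}_{(q,b)} with V unitary on ℂ²⊗ℂ² and A satisfying Σ_u (A^u)†A^u = I₂ with q ranging over {0,1}. -/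
open Matrix

noncomputable def cc : ℂ := ((Real.sqrt 2 : ℝ)⁻¹ : ℂ)

lemma hcc : cc * cc = 1/2 := by
  unfold cc
  rw [← mul_inv, ← Complex.ofReal_mul, Real.mul_self_sqrt (by norm_num)]
  norm_num

lemma hstar : star cc = cc := by
  unfold cc
  simp [Complex.star_def, Complex.conj_ofReal]

lemma hstar' : (starRingEnd ℂ) cc = cc := hstar

noncomputable def Bw (k l u r b : Fin 2) : ℂ :=
  if k = l ∧ r = b + u * l then cc else 0

/-- SGS ⊊ isoTNS: there exists a `d = 2` tensor satisfying the isoTNS isometry condition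
that admits no SGS factorization `B^k_{lurb} = Σ_q V^{(k,r)}_{(l,q)} (A^u)_{qb}` with `V`
unitary and `A` left-canonical. -/
theorem stmt19 :
    ∃ B : Fin 2 → Fin 2 → Fin 2 → Fin 2 → Fin 2 → ℂ,
      (∀ l l' b b' : Fin 2,
          ∑ k : Fin 2, ∑ u : Fin 2, ∑ r : Fin 2,
              B k l u r b * star (B k l' u r b') =
            if l = l' ∧ b = b' then 1 else 0) ∧
      ¬∃ (V : Matrix (Fin 2 × Fin 2) (Fin 2 × Fin 2) ℂ)
          (A : Fin 2 → Matrix (Fin 2) (Fin 2) ℂ),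
          Vᴴ * V = 1 ∧ (∑ u : Fin 2, (A u)ᴴ * A u = 1) ∧
          ∀ k l u r b : Fin 2, B k l u r b = ∑ q : Fin 2, V (k, r) (l, q) * A u q b := by
  refine ⟨Bw, ?_, ?_⟩
  · intro l l' b b'
    fin_cases l <;> fin_cases l' <;> fin_cases b <;> fin_cases b' <;>
      simp [Bw, Fin.sum_univ_two, hstar, hstar'] <;>
      norm_num [hcc]
  · rintro ⟨V, A, hV, _, hfac⟩
    have key : ∀ l q q' : Fin 2,
        ∑ k : Fin 2, ∑ r : Fin 2, star (V (k, r) (l, q)) * V (k, r) (l, q') =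
          if q = q' then 1 else 0 := by
      intro l q q'
      have h : (Vᴴ * V) (l, q) (l, q') = (1 : Matrix (Fin 2 × Fin 2) (Fin 2 × Fin 2) ℂ) (l, q) (l, q') := by
        rw [hV]
      simpa [Matrix.mul_apply, Matrix.conjTranspose_apply, Fintype.sum_prod_type,
        Matrix.one_apply, Prod.ext_iff] using h
    -- T l := ∑ k r, star (B k l 0 r 0) * B k l 1 r 0
    have hTfac : ∀ l : Fin 2,
        (∑ k : Fin 2, ∑ r : Fin 2, star (Bw k l 0 r 0) * Bw k l 1 r 0) =
          star (A 0 0 0) * A 1 0 0 + star (A 0 1 0) * A 1 1 0 := by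
      intro l
      have k00 := key l 0 0
      have k01 := key l 0 1
      have k10 := key l 1 0
      have k11 := key l 1 1
      rw [if_pos rfl] at k00
      rw [if_neg (by decide)] at k01
      rw [if_neg (by decide)] at k10
      rw [if_pos rfl] at k11
      simp only [Fin.sum_univ_two, Complex.star_def] at k00 k01 k10 k11
      simp only [hfac, Fin.sum_univ_two, Complex.star_def, map_add, _root_.map_mul]
      linear_combination ((starRingEnd ℂ) (A 0 0 0) * A 1 0 0) * k00 +
        ((starRingEnd ℂ) (A 0 0 0) * A 1 1 0) * k01 +
        ((starRingEnd ℂ) (A 0 1 0) * A 1 0 0) * k10 +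
        ((starRingEnd ℂ) (A 0 1 0) * A 1 1 0) * k11
    have h0 : (∑ k : Fin 2, ∑ r : Fin 2, star (Bw k 0 0 r 0) * Bw k 0 1 r 0) = 1/2 := by
      simp [Bw, Fin.sum_univ_two, hstar, hstar']
      linear_combination hcc
    have h1 : (∑ k : Fin 2, ∑ r : Fin 2, star (Bw k 1 0 r 0) * Bw k 1 1 r 0) = 0 := by
      simp [Bw, Fin.sum_univ_two, hstar, hstar']
    have := (h0.symm.trans (hTfac 0)).trans ((hTfac 1).symm.trans h1)
    norm_num at this
end
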